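/- Let k > 2 and suppose that for every non-principal Dirichlet character χ mod k one has |Σ_{p ≤ y} χ(p)| ≤ Δ. Let x ≥ 1, M ≥ 1, and let (a_m), (b_n) be complex sequences with |a_m| ≤ 1 and |b_n| ≤ 1. Then Σ_{χ ≠ χ₀ mod k} |Σ_{M < m ≤ 2M} a_m χ(m)| · |Σ_{n ≤ x/M} b_n χ(n)| · |Σ_{p ≤ y} χ(p)| ≤ Δ · φ(k) · ((M/k + 1)·M)^{1/2} · ((x/(Mk) + 1)·(x/M))^{1/2}. -/

import Mathlib

/-
Bounding the prime sum by `Δ` and applying Cauchy–Schwarz over `χ` reduces the claim to the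
mean-value estimate `∑_χ |∑_{n ∈ I} c_n χ(n)|² ≤ φ(k) (N/k + 1) ∑ |c_n|²` for an interval `I`
of length `N`. By orthogonality, the left side is `φ(k)` times the sum of `|∑_{n ≡ r} c_n|²`
over the unit residues `r`; Cauchy–Schwarz in each residue class, which meets `I` in at most
`N/k + 1` points, finishes the estimate.
-/

open Finset ComplexConjugate
open scoped Classical

theorem Nat.card_filter_modEq_Ioc_le {r : ℕ} (hr : 0 < r) (a N v : ℕ) :
    (#{n ∈ Ioc a (a + N) | n ≡ v [MOD r]} : ℝ) ≤ N / r + 1 := by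
  have hq : ((#{n ∈ Ioc a (a + N) | n ≡ v [MOD r]} : ℤ) : ℚ) ≤ N / r + 1 := by
    rw [Nat.Ioc_filter_modEq_card a (a + N) hr v, Int.cast_max]
    refine max_le ?_ (by positivity)
    push_cast
    have hdiff : (a + N - v : ℚ) / r - (a - v : ℚ) / r = N / r := by ring
    linarith [Int.floor_le ((a + N - v : ℚ) / r), Int.lt_floor_add_one ((a - v : ℚ) / r)]
  have := (Rat.cast_le (K := ℝ)).mpr hq
  push_cast at this
  exact this

namespace DirichletCharacter

theorem exists_ne_one_of_two_lt {k : ℕ} (hk : 2 < k) : ∃ χ : DirichletCharacter ℂ k, χ ≠ 1 := by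
  have : NeZero k := ⟨by omega⟩
  have htot : 1 < k.totient := by
    obtain ⟨t, ht⟩ := Nat.totient_even hk
    have := Nat.totient_pos.mpr (by omega : 0 < k)
    omega
  refine Fintype.exists_ne_of_one_lt_card ?_ 1
  rwa [← Nat.card_eq_fintype_card, card_eq_totient_of_hasEnoughRootsOfUnity]

variable {k : ℕ} [NeZero k]

theorem sum_apply_mul_conj_apply (r s : ZMod k) :
    ∑ χ : DirichletCharacter ℂ k, χ r * conj (χ s) =
      if IsUnit s ∧ r = s then (k.totient : ℂ) else 0 := by
  by_cases hs : IsUnit s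
  · obtain ⟨v, rfl⟩ := hs
    have hconj (χ : DirichletCharacter ℂ k) : conj (χ v) = χ ↑v⁻¹ := by
      rw [← Complex.star_def, MulChar.star_apply', MulChar.inv_apply, Ring.inverse_unit]
    simp only [hconj, ← map_mul, sum_characters_eq, Units.mul_inv_eq_one, Units.isUnit,
      true_and]
  · simp [hs, MulChar.map_nonunit _ hs]

theorem sum_norm_sq_sum_mul_apply (f : ZMod k → ℂ) :
    ∑ χ : DirichletCharacter ℂ k, ‖∑ r, f r * χ r‖ ^ 2 =
      k.totient * ∑ r with IsUnit r, ‖f r‖ ^ 2 := by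
  apply Complex.ofReal_injective
  have hexpand (χ : DirichletCharacter ℂ k) : (‖∑ r, f r * χ r‖ : ℂ) ^ 2 =
      ∑ r, ∑ s, f r * conj (f s) * (χ r * conj (χ s)) := by
    rw [← Complex.mul_conj', map_sum, sum_mul_sum]
    simp only [map_mul, mul_mul_mul_comm]
  push_cast
  simp_rw [hexpand]
  rw [sum_comm]
  simp_rw [sum_comm (γ := DirichletCharacter ℂ k), ← mul_sum, sum_apply_mul_conj_apply]
  rw [sum_comm, sum_filter, mul_sum]
  refine sum_congr rfl fun s _ => ?_
  simp only [ite_and, mul_ite, mul_zero, sum_ite_irrel, sum_ite_eq', mem_univ, if_true,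
    sum_const_zero, Complex.mul_conj']
  split_ifs <;> ring

theorem sum_norm_sq_sum_mul_apply_le {ι : Type*} (S : Finset ι) (e : ι → ZMod k) (c : ι → ℂ)
    {T : ℝ} (hT : ∀ r, (#{i ∈ S | e i = r} : ℝ) ≤ T) :
    ∑ χ : DirichletCharacter ℂ k, ‖∑ i ∈ S, c i * χ (e i)‖ ^ 2 ≤
      k.totient * T * ∑ i ∈ S, ‖c i‖ ^ 2 := by
  set F : ZMod k → ℂ := fun r => ∑ i ∈ S with e i = r, c i
  have hfiber (χ : DirichletCharacter ℂ k) : ∑ i ∈ S, c i * χ (e i) = ∑ r, F r * χ r := by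
    rw [← sum_fiberwise S e]
    refine sum_congr rfl fun r _ => ?_
    rw [sum_mul]
    exact sum_congr rfl fun i hi => by rw [(mem_filter.mp hi).2]
  have hF (r : ZMod k) : ‖F r‖ ^ 2 ≤ T * ∑ i ∈ S with e i = r, ‖c i‖ ^ 2 :=
    calc ‖F r‖ ^ 2 ≤ (∑ i ∈ S with e i = r, ‖c i‖) ^ 2 := by gcongr; exact norm_sum_le _ _
      _ ≤ #{i ∈ S | e i = r} * ∑ i ∈ S with e i = r, ‖c i‖ ^ 2 := sq_sum_le_card_mul_sum_sq
      _ ≤ T * ∑ i ∈ S with e i = r, ‖c i‖ ^ 2 := by gcongr; exact hT r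
  calc ∑ χ : DirichletCharacter ℂ k, ‖∑ i ∈ S, c i * χ (e i)‖ ^ 2
      = k.totient * ∑ r with IsUnit r, ‖F r‖ ^ 2 := by
        simp_rw [hfiber]; exact sum_norm_sq_sum_mul_apply F
    _ ≤ k.totient * ∑ r, ‖F r‖ ^ 2 := by gcongr; exact subset_univ _
    _ ≤ k.totient * ∑ r, T * ∑ i ∈ S with e i = r, ‖c i‖ ^ 2 := by gcongr with r; exact hF r
    _ = k.totient * T * ∑ i ∈ S, ‖c i‖ ^ 2 := by rw [← mul_sum, sum_fiberwise, mul_assoc]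

theorem card_filter_natCast_eq_Ioc_le (a N : ℕ) (r : ZMod k) :
    (#((Ioc a (a + N)).filter fun n : ℕ => (n : ZMod k) = r) : ℝ) ≤ N / k + 1 := by
  rw [← ZMod.natCast_zmod_val r]
  simp_rw [ZMod.natCast_eq_natCast_iff]
  exact Nat.card_filter_modEq_Ioc_le (Nat.pos_of_ne_zero (NeZero.ne k)) a N r.val

theorem sum_norm_sq_sum_Ioc_le (a N : ℕ) {c : ℕ → ℂ} (hc : ∀ n, ‖c n‖ ≤ 1) :
    ∑ χ : DirichletCharacter ℂ k, ‖∑ n ∈ Ioc a (a + N), c n * χ n‖ ^ 2 ≤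
      k.totient * ((N / k + 1) * N) := by
  have hc2 : ∑ n ∈ Ioc a (a + N), ‖c n‖ ^ 2 ≤ N :=
    calc ∑ n ∈ Ioc a (a + N), ‖c n‖ ^ 2 ≤ ∑ n ∈ Ioc a (a + N), (1 : ℝ) :=
          sum_le_sum fun n _ => pow_le_one₀ (norm_nonneg _) (hc n)
      _ = N := by simp
  calc _ ≤ k.totient * (N / k + 1) * ∑ n ∈ Ioc a (a + N), ‖c n‖ ^ 2 :=
        sum_norm_sq_sum_mul_apply_le _ _ c (card_filter_natCast_eq_Ioc_le a N)
    _ ≤ k.totient * ((N / k + 1) * N) := by rw [mul_assoc]; gcongr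

end DirichletCharacter

open DirichletCharacter in
theorem type_II_core_general (k : ℕ) (hk : 2 < k) (y M : ℕ) (x : ℝ) (hx : 1 ≤ x)
    (Δ : ℝ)
    (hΔ : ∀ χ : DirichletCharacter ℂ k, χ ≠ 1 →
      ‖∑ p ∈ (Finset.Icc 1 y).filter Nat.Prime, χ (p : ZMod k)‖ ≤ Δ)
    (a b : ℕ → ℂ) (ha : ∀ m, ‖a m‖ ≤ 1) (hb : ∀ n, ‖b n‖ ≤ 1) :
    ∑ χ ∈ Finset.univ.filter (fun χ : DirichletCharacter ℂ k => χ ≠ 1),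
        ‖∑ m ∈ Finset.Ioc M (2 * M), a m * χ (m : ZMod k)‖ *
        ‖∑ n ∈ Finset.Icc 1 ⌊x / M⌋₊, b n * χ (n : ZMod k)‖ *
        ‖∑ p ∈ (Finset.Icc 1 y).filter Nat.Prime, χ (p : ZMod k)‖ ≤
      Δ * (Nat.totient k : ℝ) * Real.sqrt (((M : ℝ) / k + 1) * M) *
        Real.sqrt ((x / ((M : ℝ) * k) + 1) * (x / M)) := by
  have : NeZero k := ⟨by omega⟩
  obtain ⟨χ₁, hχ₁⟩ := exists_ne_one_of_two_lt hk
  have hΔ0 : 0 ≤ Δ := (norm_nonneg _).trans (hΔ χ₁ hχ₁)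
  set A := fun χ : DirichletCharacter ℂ k => ‖∑ m ∈ Ioc M (2 * M), a m * χ m‖
  set B := fun χ : DirichletCharacter ℂ k => ‖∑ n ∈ Icc 1 ⌊x / M⌋₊, b n * χ n‖
  have hA : ∑ χ, A χ ^ 2 ≤ k.totient * ((M / k + 1) * M) := by
    simpa only [A, two_mul] using sum_norm_sq_sum_Ioc_le M M ha
  have hB : ∑ χ, B χ ^ 2 ≤ k.totient * ((x / (M * k) + 1) * (x / M)) := by
    have hN : (⌊x / M⌋₊ : ℝ) ≤ x / M := Nat.floor_le (by positivity)
    have hIcc : Icc 1 ⌊x / M⌋₊ = Ioc 0 (0 + ⌊x / M⌋₊) := by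
      rw [zero_add, ← Icc_add_one_left_eq_Ioc, zero_add]
    refine (hIcc ▸ sum_norm_sq_sum_Ioc_le 0 _ hb).trans ?_
    rw [← div_div]
    gcongr
  calc _ ≤ Δ * ∑ χ, A χ * B χ := by
        rw [mul_sum]
        refine (sum_le_sum fun χ hχ => ?_).trans
          (sum_le_sum_of_subset_of_nonneg (subset_univ _) fun _ _ _ => by positivity)
        rw [mul_comm Δ]
        exact mul_le_mul_of_nonneg_left (hΔ χ (by simpa using hχ)) (by positivity)
    _ ≤ Δ * (√(∑ χ, A χ ^ 2) * √(∑ χ, B χ ^ 2)) := by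
        gcongr; exact Real.sum_mul_le_sqrt_mul_sqrt _ _ _
    _ ≤ Δ * (√(k.totient * ((M / k + 1) * M)) * √(k.totient * ((x / (M * k) + 1) * (x / M)))) := by
        gcongr
    _ = _ := by
        have hφ : (0 : ℝ) ≤ k.totient := Nat.cast_nonneg _
        rw [Real.sqrt_mul hφ, Real.sqrt_mul hφ, mul_mul_mul_comm, Real.mul_self_sqrt hφ]
        ring

/-- The core Type II inequality: under a bound `Δ` for prime character sums, the
sum over non-principal characters `χ` mod `k` of
`|∑_{M < m ≤ 2M} a_m χ(m)| · |∑_{n ≤ x/M} b_n χ(n)| · |∑_{p ≤ y} χ(p)|` is at most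
`Δ · φ(k) · ((M/k + 1)M)^{1/2} · ((x/(Mk) + 1)(x/M))^{1/2}`. -/
theorem type_II_core (k : ℕ) (hk : 2 < k) (y M : ℕ) (hM : 1 ≤ M) (x : ℝ) (hx : 1 ≤ x)
    (Δ : ℝ)
    (hΔ : ∀ χ : DirichletCharacter ℂ k, χ ≠ 1 →
      ‖∑ p ∈ (Finset.Icc 1 y).filter Nat.Prime, χ (p : ZMod k)‖ ≤ Δ)
    (a b : ℕ → ℂ) (ha : ∀ m, ‖a m‖ ≤ 1) (hb : ∀ n, ‖b n‖ ≤ 1) :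
    ∑ χ ∈ Finset.univ.filter (fun χ : DirichletCharacter ℂ k => χ ≠ 1),
        ‖∑ m ∈ Finset.Ioc M (2 * M), a m * χ (m : ZMod k)‖ *
        ‖∑ n ∈ Finset.Icc 1 ⌊x / M⌋₊, b n * χ (n : ZMod k)‖ *
        ‖∑ p ∈ (Finset.Icc 1 y).filter Nat.Prime, χ (p : ZMod k)‖ ≤
      Δ * (Nat.totient k : ℝ) * Real.sqrt (((M : ℝ) / k + 1) * M) *
        Real.sqrt ((x / ((M : ℝ) * k) + 1) * (x / M)) :=
  type_II_core_general k hk y M x hx Δ hΔ a b ha hb
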